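/- Let (P_n) be strongly invariant for the system (A). The pair (A,P) is exponentially dichotomic (i.e., (h,k)-dichotomic for the rates h_m = e^{αm}, k_m = e^{βm} for some α, β > 0) if and only if there exist a sequence of norms 𝒩 = {|||·|||_n : n ∈ ℕ} compatible with (P_n), real constants α, β > 0 and a nondecreasing sequence s : ℕ → [1,∞) such that |||A_m^n P_n x|||_m ≤ s_n e^{−α(m−n)}|||x|||_n and |||B_m^n Q_m x|||_n ≤ s_m e^{−β(m−n)}|||x|||_m for all m ≥ n and all x ∈ X. -/

import Mathlib

open ContinuousLinearMap Filter

noncomputable section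

variable {X : Type*} [NormedAddCommGroup X] [NormedSpace ℝ X]

/-- The evolution operator `A_m^n` associated to the linear difference system
`x_{n+1} = A_n x_n`: `A_m^n = A_{m-1} ⋯ A_n` for `m > n` and `A_n^n = I`. -/
def evol (A : ℕ → X →L[ℝ] X) : ℕ → ℕ → X →L[ℝ] X
  | 0, _ => 1
  | m + 1, n => if m + 1 ≤ n then 1 else A m ∘L evol A m n

/-- `P` is a projectors sequence. -/
def ProjSeq (P : ℕ → X →L[ℝ] X) : Prop := ∀ n, P n ∘L P n = P n

/-- The projectors sequence `P` is invariant for the system `(A)`. -/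
def InvariantFor (A P : ℕ → X →L[ℝ] X) : Prop := ∀ n, A n ∘L P n = P (n + 1) ∘L A n

/-- The projectors sequence `P` is strongly invariant for the system `(A)`: it is invariant and
the restriction of `A_m^n` to `Ker P_n` is an isomorphism from `Ker P_n` onto `Ker P_m`. -/
def StronglyInvariantFor (A P : ℕ → X →L[ℝ] X) : Prop :=
  InvariantFor A P ∧ ∀ m n : ℕ, n ≤ m →
    Set.BijOn (evol A m n) (LinearMap.ker (P n : X →ₗ[ℝ] X) : Set X) (LinearMap.ker (P m : X →ₗ[ℝ] X))

/-- A growth rate: an increasing sequence with values in `[1, ∞)` tending to `∞`. -/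
def IsGrowthRate (h : ℕ → ℝ) : Prop :=
  StrictMono h ∧ (∀ n, 1 ≤ h n) ∧ Tendsto h atTop atTop

/-- The pair `(A, P)` is `(h,k)`-dichotomic. -/
def Dichotomic (A P : ℕ → X →L[ℝ] X) (h k : ℕ → ℝ) : Prop :=
  ∃ d : ℕ → ℝ, (∀ n, 1 ≤ d n) ∧ Monotone d ∧
    ∀ m n : ℕ, n ≤ m → ∀ x : X,
      h m * ‖evol A m n (P n x)‖ ≤ d n * (h n * ‖P n x‖) ∧
      k m * ‖(1 - P n) x‖ ≤ d m * (k n * ‖evol A m n ((1 - P n) x)‖)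

/-- The pair `(A, P)` is uniformly `(h,k)`-dichotomic. -/
def UniformDichotomic (A P : ℕ → X →L[ℝ] X) (h k : ℕ → ℝ) : Prop :=
  ∃ d : ℝ, 1 ≤ d ∧
    ∀ m n : ℕ, n ≤ m → ∀ x : X,
      h m * ‖evol A m n (P n x)‖ ≤ d * (h n * ‖P n x‖) ∧
      k m * ‖(1 - P n) x‖ ≤ d * (k n * ‖evol A m n ((1 - P n) x)‖)

/-- The pair `(A, P)` has `(h,k)`-growth. -/
def HasGrowth (A P : ℕ → X →L[ℝ] X) (h k : ℕ → ℝ) : Prop :=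
  ∃ g : ℕ → ℝ, (∀ n, 1 ≤ g n) ∧ Monotone g ∧
    ∀ m n : ℕ, n ≤ m → ∀ x : X,
      h n * ‖evol A m n (P n x)‖ ≤ g n * (h m * ‖P n x‖) ∧
      k n * ‖(1 - P n) x‖ ≤ g m * (k m * ‖evol A m n ((1 - P n) x)‖)

/-- `N` is a sequence of norms on `X`. -/
def IsNormSeq (N : ℕ → X → ℝ) : Prop :=
  ∀ n, (∀ x y, N n (x + y) ≤ N n x + N n y) ∧
    (∀ (a : ℝ) (x : X), N n (a • x) = |a| * N n x) ∧
    (∀ x, N n x = 0 ↔ x = 0)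

/-- The sequence of norms `N` is compatible with the projectors sequence `P`. -/
def NormsCompatible (N : ℕ → X → ℝ) (P : ℕ → X →L[ℝ] X) : Prop :=
  IsNormSeq N ∧ ∃ c : ℕ → ℝ, (∀ n, 1 ≤ c n) ∧ Monotone c ∧
    ∀ (n : ℕ) (x : X), ‖x‖ ≤ N n x ∧ N n x ≤ c n * (‖P n x‖ + ‖(1 - P n) x‖)

/-- The defining properties of the skew-evolution operator `B` associated to the pair `(A, P)`:
`A_m^n B_m^n Q_m = Q_m`, `B_m^n A_m^n Q_n = Q_n` and `B_m^n Q_m = Q_n B_m^n Q_m` for `m ≥ n`,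
where `Q_n = I - P_n`. -/
def SkewEvol (A P : ℕ → X →L[ℝ] X) (B : ℕ → ℕ → X →L[ℝ] X) : Prop :=
  ∀ m n : ℕ, n ≤ m →
    evol A m n ∘L (B m n ∘L (1 - P m)) = 1 - P m ∧
    B m n ∘L (evol A m n ∘L (1 - P n)) = 1 - P n ∧
    B m n ∘L (1 - P m) = (1 - P n) ∘L (B m n ∘L (1 - P m))

/-! Both directions compare the given norms with the split norms `‖P_n x‖ + ‖Q_n x‖`, which are
themselves compatible with `(P_n)`. On the range of `P_n` and on its kernel every compatible norm
lies between `‖·‖` and `c_n ‖·‖`; invariance places `A_m^n P_n x` in the range of `P_m`, and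
`B_m^n Q_m x` lies in the kernel of `P_n`. The factor `e^{αm}` of the dichotomy turns into
`e^{-α(m-n)}` once `e^{αn}` is moved to the other side. -/

open Real

section

variable {A P : ℕ → X →L[ℝ] X} {B : ℕ → ℕ → X →L[ℝ] X}

lemma exp_mul_le_mul_exp_mul_iff (γ t u a b d : ℝ) :
    exp (γ * t) * a ≤ d * (exp (γ * u) * b) ↔ a ≤ d * (exp (-γ * (t - u)) * b) := by
  have hsplit : exp (γ * u) = exp (γ * t) * exp (-γ * (t - u)) := by
    rw [← exp_add]; ring_nf
  rw [hsplit, show d * (exp (γ * t) * exp (-γ * (t - u)) * b)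
      = exp (γ * t) * (d * (exp (-γ * (t - u)) * b)) by ring, mul_le_mul_iff_right₀ (exp_pos _)]

lemma evol_self (A : ℕ → X →L[ℝ] X) (n : ℕ) : evol A n n = 1 := by
  cases n with
  | zero => rfl
  | succ n => simp [evol]

lemma evol_succ (A : ℕ → X →L[ℝ] X) {m n : ℕ} (hnm : n ≤ m) :
    evol A (m + 1) n = A m ∘L evol A m n := by
  simp [evol, show ¬ m + 1 ≤ n by omega]

lemma InvariantFor.evol_apply_proj (hInv : InvariantFor A P) {m n : ℕ} (hnm : n ≤ m) (x : X) :
    evol A m n (P n x) = P m (evol A m n x) := by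
  induction m, hnm using Nat.le_induction with
  | base => simp [evol_self]
  | succ m hnm ih =>
    rw [evol_succ A hnm, comp_apply, ih, ← comp_apply (A m), hInv m, comp_apply, comp_apply]

lemma InvariantFor.evol_apply_compl (hInv : InvariantFor A P) {m n : ℕ} (hnm : n ≤ m) (x : X) :
    evol A m n ((1 - P n) x) = (1 - P m) (evol A m n x) := by
  simp [hInv.evol_apply_proj hnm]

namespace ProjSeq

variable (hP : ProjSeq P) (n : ℕ) (x : X)
include hP

lemma apply_apply : P n (P n x) = P n x := congr($(hP n) x)

lemma apply_compl_apply : P n ((1 - P n) x) = 0 := by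
  simp [hP.apply_apply]

end ProjSeq

def splitNorm (P : ℕ → X →L[ℝ] X) (n : ℕ) (x : X) : ℝ := ‖P n x‖ + ‖(1 - P n) x‖

lemma norm_le_splitNorm (P : ℕ → X →L[ℝ] X) (n : ℕ) (x : X) : ‖x‖ ≤ splitNorm P n x := by
  calc ‖x‖ = ‖P n x + (1 - P n) x‖ := by simp
    _ ≤ splitNorm P n x := norm_add_le _ _

lemma splitNorm_of_apply_eq_self {n : ℕ} {x : X} (hx : P n x = x) : splitNorm P n x = ‖x‖ := by
  simp [splitNorm, hx]

lemma splitNorm_of_apply_eq_zero {n : ℕ} {x : X} (hx : P n x = 0) : splitNorm P n x = ‖x‖ := by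
  simp [splitNorm, hx]

lemma isNormSeq_splitNorm (P : ℕ → X →L[ℝ] X) : IsNormSeq (splitNorm P) := by
  refine fun n => ⟨fun x y => ?_, fun a x => ?_,
    fun x => ⟨fun hx => ?_, fun hx => by simp [splitNorm, hx]⟩⟩
  · simp only [splitNorm, map_add]
    linarith [norm_add_le (P n x) (P n y), norm_add_le ((1 - P n) x) ((1 - P n) y)]
  · simp only [splitNorm, map_smul, norm_smul, Real.norm_eq_abs]
    ring
  · exact norm_le_zero_iff.mp (hx ▸ norm_le_splitNorm P n x)

lemma normsCompatible_splitNorm (P : ℕ → X →L[ℝ] X) : NormsCompatible (splitNorm P) P :=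
  ⟨isNormSeq_splitNorm P, 1, fun _ => le_rfl, monotone_const,
    fun n x => ⟨norm_le_splitNorm P n x, (one_mul _).ge⟩⟩

def NormDichotomic (A P : ℕ → X →L[ℝ] X) (B : ℕ → ℕ → X →L[ℝ] X) (N : ℕ → X → ℝ)
    (α β : ℝ) : Prop :=
  ∃ s : ℕ → ℝ, (∀ n, 1 ≤ s n) ∧ Monotone s ∧
    ∀ m n : ℕ, n ≤ m → ∀ x : X,
      N m (evol A m n (P n x)) ≤ s n * (exp (-α * ((m : ℝ) - n)) * N n x) ∧
      N n (B m n ((1 - P m) x)) ≤ s m * (exp (-β * ((m : ℝ) - n)) * N m x)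

variable (hP : ProjSeq P) (hInv : InvariantFor A P) (hB : SkewEvol A P B)
include hP hInv hB

lemma normDichotomic_splitNorm {α β : ℝ}
    (hd : Dichotomic A P (fun m => exp (α * m)) (fun m => exp (β * m))) :
    NormDichotomic A P B (splitNorm P) α β := by
  obtain ⟨d, hd1, hdm, hest⟩ := hd
  refine ⟨d, hd1, hdm, fun m n hnm x => ⟨?_, ?_⟩⟩
  · have hrange : P m (evol A m n (P n x)) = evol A m n (P n x) := by
      rw [← hInv.evol_apply_proj hnm, hP.apply_apply]
    rw [splitNorm_of_apply_eq_self hrange]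
    calc ‖evol A m n (P n x)‖ ≤ d n * (exp (-α * ((m : ℝ) - n)) * ‖P n x‖) :=
          (exp_mul_le_mul_exp_mul_iff _ _ _ _ _ _).mp (hest m n hnm x).1
      _ ≤ d n * (exp (-α * ((m : ℝ) - n)) * splitNorm P n x) := by
          gcongr
          · linarith [hd1 n]
          · exact le_add_of_nonneg_right (norm_nonneg _)
  · set y := B m n ((1 - P m) x)
    have hkernel : P n y = 0 := by
      rw [show y = (1 - P n) y from congr($((hB m n hnm).2.2) x), hP.apply_compl_apply]
    have hQy : (1 - P n) y = y := by simp [hkernel]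
    have hAy : evol A m n y = (1 - P m) x := congr($((hB m n hnm).1) x)
    have h := (hest m n hnm y).2
    rw [hQy, hAy] at h
    rw [splitNorm_of_apply_eq_zero hkernel]
    calc ‖y‖ ≤ d m * (exp (-β * ((m : ℝ) - n)) * ‖(1 - P m) x‖) :=
          (exp_mul_le_mul_exp_mul_iff _ _ _ _ _ _).mp h
      _ ≤ d m * (exp (-β * ((m : ℝ) - n)) * splitNorm P m x) := by
          gcongr
          · linarith [hd1 m]
          · exact le_add_of_nonneg_left (norm_nonneg _)

lemma dichotomic_of_normDichotomic {N : ℕ → X → ℝ} {α β : ℝ} (hN : NormsCompatible N P)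
    (hNd : NormDichotomic A P B N α β) :
    Dichotomic A P (fun m => exp (α * m)) (fun m => exp (β * m)) := by
  obtain ⟨-, c, hc1, hcm, hcomp⟩ := hN
  obtain ⟨s, hs1, hsm, hest⟩ := hNd
  have hc0 n : 0 ≤ c n := zero_le_one.trans (hc1 n)
  have hs0 n : 0 ≤ s n := zero_le_one.trans (hs1 n)
  refine ⟨fun n => s n * c n, fun n => one_le_mul_of_one_le_of_one_le (hs1 n) (hc1 n),
    hsm.mul hcm hs0 hc0, fun m n hnm x => ⟨?_, ?_⟩⟩
  · have hNPx : N n (P n x) ≤ c n * ‖P n x‖ := by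
      have h := (hcomp n (P n x)).2
      rwa [← splitNorm, splitNorm_of_apply_eq_self (hP.apply_apply n x)] at h
    have h := (hest m n hnm (P n x)).1
    rw [hP.apply_apply] at h
    refine (exp_mul_le_mul_exp_mul_iff _ _ _ _ _ _).mpr ?_
    calc ‖evol A m n (P n x)‖ ≤ N m (evol A m n (P n x)) := (hcomp m _).1
      _ ≤ s n * (exp (-α * ((m : ℝ) - n)) * (c n * ‖P n x‖)) := by
          refine h.trans ?_
          gcongr
          exact hs0 _
      _ = s n * c n * (exp (-α * ((m : ℝ) - n)) * ‖P n x‖) := by ring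
  · set y := evol A m n ((1 - P n) x)
    have hkernel : P m y = 0 := by
      rw [show y = evol A m n ((1 - P n) x) from rfl, hInv.evol_apply_compl hnm,
        hP.apply_compl_apply]
    have hQy : (1 - P m) y = y := by simp [hkernel]
    have hNy : N m y ≤ c m * ‖y‖ := by
      have h := (hcomp m y).2
      rwa [← splitNorm, splitNorm_of_apply_eq_zero hkernel] at h
    have hBy : B m n ((1 - P m) y) = (1 - P n) x := by
      rw [hQy]; exact congr($((hB m n hnm).2.1) x)
    have h := (hest m n hnm y).2
    rw [hBy] at h
    refine (exp_mul_le_mul_exp_mul_iff _ _ _ _ _ _).mpr ?_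
    calc ‖(1 - P n) x‖ ≤ N n ((1 - P n) x) := (hcomp n _).1
      _ ≤ s m * (exp (-β * ((m : ℝ) - n)) * (c m * ‖y‖)) := by
          refine h.trans ?_
          gcongr
          exact hs0 _
      _ = s m * c m * (exp (-β * ((m : ℝ) - n)) * ‖y‖) := by ring

end

theorem stmt_14_general (A P : ℕ → X →L[ℝ] X) (B : ℕ → ℕ → X →L[ℝ] X)
    (hP : ProjSeq P) (hSI : StronglyInvariantFor A P) (hB : SkewEvol A P B) :
    (∃ α β : ℝ, 0 < α ∧ 0 < β ∧
      Dichotomic A P (fun m => Real.exp (α * m)) (fun m => Real.exp (β * m))) ↔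
      ∃ N : ℕ → X → ℝ, NormsCompatible N P ∧ ∃ α β : ℝ, 0 < α ∧ 0 < β ∧
        ∃ s : ℕ → ℝ, (∀ n, 1 ≤ s n) ∧ Monotone s ∧
          ∀ m n : ℕ, n ≤ m → ∀ x : X,
            N m (evol A m n (P n x)) ≤ s n * (Real.exp (-α * ((m : ℝ) - n)) * N n x) ∧
            N n (B m n ((1 - P m) x)) ≤ s m * (Real.exp (-β * ((m : ℝ) - n)) * N m x) := by
  constructor
  · rintro ⟨α, β, hα, hβ, hd⟩
    exact ⟨splitNorm P, normsCompatible_splitNorm P, α, β, hα, hβ,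
      normDichotomic_splitNorm hP hSI.1 hB hd⟩
  · rintro ⟨N, hN, α, β, hα, hβ, hNd⟩
    exact ⟨α, β, hα, hβ, dichotomic_of_normDichotomic hP hSI.1 hB hN hNd⟩

theorem stmt_14 [CompleteSpace X] (A P : ℕ → X →L[ℝ] X) (B : ℕ → ℕ → X →L[ℝ] X)
    (hP : ProjSeq P) (hSI : StronglyInvariantFor A P) (hB : SkewEvol A P B) :
    (∃ α β : ℝ, 0 < α ∧ 0 < β ∧
      Dichotomic A P (fun m => Real.exp (α * m)) (fun m => Real.exp (β * m))) ↔
      ∃ N : ℕ → X → ℝ, NormsCompatible N P ∧ ∃ α β : ℝ, 0 < α ∧ 0 < β ∧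
        ∃ s : ℕ → ℝ, (∀ n, 1 ≤ s n) ∧ Monotone s ∧
          ∀ m n : ℕ, n ≤ m → ∀ x : X,
            N m (evol A m n (P n x)) ≤ s n * (Real.exp (-α * ((m : ℝ) - n)) * N n x) ∧
            N n (B m n ((1 - P m) x)) ≤ s m * (Real.exp (-β * ((m : ℝ) - n)) * N m x) :=
  stmt_14_general A P B hP hSI hB
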